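/- Suppose θ < 0 and T is an SPT of G rooted at s such that the tree path π_{s,x₀} from s to x₀ in T does not traverse e₀. Let σ be a path from y₀ to some vertex x in G that does not traverse e₀, let (x, y) ∈ E be an edge whose head y lies on π_{s,x₀}, and suppose dist_G(x₀) + ω'(e₀) + length_G(σ) + ω(x, y) < dist_G(y). Then the cycle π_{s,x₀}[y, x₀] + (x₀, y₀) + σ + (x, y) is a negative cycle of G'; in particular, G' has a negative cycle. -/

import Mathlib

namespace DynSPT

variable {V : Type*}

/-- The list of consecutive edges of a path given as a list of vertices. -/
def edgeList (l : List V) : List (V × V) := l.zip l.tail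

/-- The length of a path with respect to the weight function `ω`. -/
def len (ω : V → V → ℝ) (l : List V) : ℝ :=
  ((edgeList l).map fun p => ω p.1 p.2).sum

/-- `l` is a path in the directed graph with edge relation `E`. -/
def IsWalk (E : V → V → Prop) (l : List V) : Prop := l ≠ [] ∧ l.Chain' E

/-- `l` is a path from `u` to `v` in the directed graph with edge relation `E`. -/
def IsWalkFrom (E : V → V → Prop) (l : List V) (u v : V) : Prop :=
  IsWalk E l ∧ l.head? = some u ∧ l.getLast? = some v

/-- The path `l` traverses the edge `e`. -/
def Traverses (l : List V) (e : V × V) : Prop := e ∈ edgeList l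

/-- `l` is a cycle: a path with at least one edge whose first and last vertices agree. -/
def IsCycle (E : V → V → Prop) (l : List V) : Prop :=
  ∃ v, IsWalkFrom E l v v ∧ 2 ≤ l.length

/-- The weighted directed graph `(E, ω)` has a negative cycle. -/
def HasNegCycle (E : V → V → Prop) (ω : V → V → ℝ) : Prop :=
  ∃ l, IsCycle E l ∧ len ω l < 0

/-- The weighted directed graph `(E, ω)` has a zero-length cycle. -/
def HasZeroCycle (E : V → V → Prop) (ω : V → V → ℝ) : Prop :=
  ∃ l, IsCycle E l ∧ len ω l = 0

/-- The distance from `s` to `v`: the infimum of the lengths of paths from `s` to `v`. -/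
noncomputable def dist (E : V → V → Prop) (ω : V → V → ℝ) (s v : V) : ℝ :=
  sInf {L : ℝ | ∃ l, IsWalkFrom E l s v ∧ len ω l = L}

/-- A spanning tree of the directed graph `E` rooted at `s`, recorded by the parent
function together with, for every vertex `v`, the tree path from `s` to `v`. -/
structure RootedTree (E : V → V → Prop) (s : V) where
  parent : V → V
  path : V → List V
  path_root : path s = [s]
  parent_edge : ∀ v, v ≠ s → E (parent v) v
  path_eq : ∀ v, v ≠ s → path v = path (parent v) ++ [v]
  path_isWalkFrom : ∀ v, IsWalkFrom E (path v) s v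

/-- `(a, b)` is an edge of the rooted tree `T`. -/
def RootedTree.IsEdge {E : V → V → Prop} {s : V} (T : RootedTree E s) (a b : V) : Prop :=
  b ≠ s ∧ T.parent b = a

/-- `T` is a shortest-path tree for the weight function `ω`:
every tree path from the root is a shortest path. -/
def IsSPT {E : V → V → Prop} {s : V} (ω : V → V → ℝ) (T : RootedTree E s) : Prop :=
  ∀ v, len ω (T.path v) = dist E ω s v

lemma edgeList_cons_cons (a b : V) (l : List V) :
    edgeList (a :: b :: l) = (a, b) :: edgeList (b :: l) := rfl

lemma edgeList_append_cons : ∀ (a : List V) (v : V) (b : List V),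
    edgeList (a ++ v :: b) = edgeList (a ++ [v]) ++ edgeList (v :: b)
  | [], v, b => by simp [edgeList]
  | [h], v, b => by simp [edgeList_cons_cons, edgeList]
  | h :: c :: t, v, b => by
    have ih := edgeList_append_cons (c :: t) v b
    simp only [List.cons_append, edgeList_cons_cons] at *
    rw [ih]

lemma edgeList_concat : ∀ (l : List V) (u v : V), l.getLast? = some u →
    edgeList (l ++ [v]) = edgeList l ++ [(u, v)]
  | [], u, v, h => by simp at h
  | [a], u, v, h => by simp at h; subst h; rfl
  | a :: c :: t, u, v, h => by
    have ih := edgeList_concat (c :: t) u v (by simpa using h)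
    simp only [List.cons_append, edgeList_cons_cons] at *
    rw [ih]

lemma len_append_cons (ω : V → V → ℝ) (a : List V) (v : V) (b : List V) :
    len ω (a ++ v :: b) = len ω (a ++ [v]) + len ω (v :: b) := by
  rw [len, len, len, edgeList_append_cons, List.map_append, List.sum_append]

lemma len_congr (ω ω' : V → V → ℝ) (l : List V)
    (h : ∀ e ∈ edgeList l, ω' e.1 e.2 = ω e.1 e.2) : len ω' l = len ω l := by
  unfold len
  congr 1
  exact List.map_congr_left (fun a ha => h a ha)

lemma path_prefix {E : V → V → Prop} {s : V} (T : RootedTree E s) (l₂ : List V) :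
    ∀ (v : V) (l₁ : List V) (y : V), T.path v = l₁ ++ y :: l₂ → T.path y = l₁ ++ [y] := by
  induction l₂ using List.reverseRecOn with
  | nil =>
    intro v l₁ y h
    have hv := (T.path_isWalkFrom v).2.2
    rw [h] at hv
    simp at hv
    subst hv
    exact h
  | append_singleton l₂' z ih =>
    intro v l₁ y h
    have hv := (T.path_isWalkFrom v).2.2
    rw [h] at hv
    have hgl : (l₁ ++ y :: (l₂' ++ [z])).getLast? = some z := by
      rw [show l₁ ++ y :: (l₂' ++ [z]) = (l₁ ++ y :: l₂') ++ [z] by simp]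
      exact List.getLast?_concat
    rw [hgl] at hv
    have hvz : z = v := by injection hv
    subst hvz
    have hvs : z ≠ s := by
      intro hvs
      subst hvs
      rw [T.path_root] at h
      have := congrArg List.length h
      simp at this
      omega
    have heq : T.path (T.parent z) ++ [z] = (l₁ ++ y :: l₂') ++ [z] := by
      rw [← T.path_eq z hvs, h]; simp
    have hdl := congrArg List.dropLast heq
    rw [List.dropLast_concat, List.dropLast_concat] at hdl
    exact ih (T.parent z) l₁ y hdl

theorem statement_18
    {V : Type*} [Fintype V] (E : V → V → Prop) (ω ω' : V → V → ℝ) (s x₀ y₀ : V)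
    (hE₀ : E x₀ y₀)
    (hreach : ∀ v, ∃ l, IsWalkFrom E l s v)
    (hω' : ∀ a b, (a, b) ≠ (x₀, y₀) → ω' a b = ω a b)
    (hG : ¬ HasNegCycle E ω)
    (hθ : ω' x₀ y₀ - ω x₀ y₀ < 0)
    (T : RootedTree E s) (hT : IsSPT ω T)
    (hnotrav : ¬ Traverses (T.path x₀) (x₀, y₀))
    (σ : List V) (x y : V) (hσ : IsWalkFrom E σ y₀ x)
    (hσnot : ¬ Traverses σ (x₀, y₀)) (hxy : E x y)
    (l₁ l₂ : List V) (hdecomp : T.path x₀ = l₁ ++ y :: l₂)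
    (hlt : dist E ω s x₀ + ω' x₀ y₀ + len ω σ + ω x y < dist E ω s y) :
    IsCycle E ((y :: l₂) ++ σ ++ [y]) ∧ len ω' ((y :: l₂) ++ σ ++ [y]) < 0 ∧
      HasNegCycle E ω'  := by
  obtain ⟨⟨hσne, hσchain⟩, hσhead, hσlast⟩ := hσ
  obtain ⟨σ', rfl⟩ : ∃ σ', σ = y₀ :: σ' := by
    cases σ with
    | nil => simp at hσhead
    | cons a t => simp at hσhead; exact ⟨t, by rw [hσhead]⟩
  set A : List V := y :: l₂ with hA
  have hTlast := (T.path_isWalkFrom x₀).2.2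
  rw [hdecomp] at hTlast
  have hAlast : A.getLast? = some x₀ := by
    rw [List.getLast?_append] at hTlast
    have h1 : A.getLast? = some (A.getLast (by simp [hA])) :=
      List.getLast?_eq_getLast _
    rw [h1] at hTlast ⊢
    simpa using hTlast
  have hEC : edgeList (A ++ (y₀ :: σ') ++ [y]) =
      edgeList A ++ ((x₀, y₀) :: (edgeList (y₀ :: σ') ++ [(x, y)])) := by
    have e1 : A ++ (y₀ :: σ') ++ [y] = A ++ y₀ :: (σ' ++ [y]) := by simp
    rw [e1, edgeList_append_cons, edgeList_concat A x₀ y₀ hAlast,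
      show y₀ :: (σ' ++ [y]) = (y₀ :: σ') ++ [y] by simp,
      edgeList_concat (y₀ :: σ') x y hσlast]
    simp
  have hchainT : (T.path x₀).Chain' E := (T.path_isWalkFrom x₀).1.2
  rw [hdecomp] at hchainT
  have hcyc : IsCycle E (A ++ (y₀ :: σ') ++ [y]) := by
    refine ⟨y, ⟨⟨by simp, ?_⟩, by simp [hA],
      by rw [show A ++ (y₀ :: σ') ++ [y] = (A ++ (y₀ :: σ')) ++ [y] by simp]
         exact List.getLast?_concat⟩, by simp [hA]; omega⟩
    rw [List.append_assoc]
    refine List.isChain_append.mpr ⟨hchainT.right_of_append, ?_, ?_⟩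
    · refine List.isChain_append.mpr ⟨hσchain, by simp, ?_⟩
      intro a ha b hb
      rw [hσlast] at ha
      simp at ha hb
      subst ha; subst hb; exact hxy
    · intro a ha b hb
      rw [hAlast] at ha
      simp at ha hb
      subst ha; subst hb; exact hE₀
  have hlenC : len ω' (A ++ (y₀ :: σ') ++ [y]) =
      len ω' A + ω' x₀ y₀ + len ω' (y₀ :: σ') + ω' x y := by
    unfold len
    rw [hEC]
    simp [List.map_append, List.sum_append]
    ring
  have hA' : len ω' A = len ω A := by
    refine len_congr ω ω' A (fun e he => ?_)
    refine hω' e.1 e.2 (fun hc => hnotrav ?_)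
    rw [Traverses, hdecomp, edgeList_append_cons]
    exact List.mem_append_right _ (by rwa [← hc])
  have hσ'' : len ω' (y₀ :: σ') = len ω (y₀ :: σ') := by
    refine len_congr ω ω' _ (fun e he => ?_)
    refine hω' e.1 e.2 (fun hc => hσnot ?_)
    rwa [Traverses, ← hc]
  have hωxy : ω' x y ≤ ω x y := by
    by_cases hc : (x, y) = (x₀, y₀)
    · obtain ⟨h1, h2⟩ := Prod.mk.injEq .. ▸ hc
      subst h1; subst h2; linarith
    · rw [hω' x y hc]
  have hlenA : len ω A = dist E ω s x₀ - dist E ω s y := by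
    have h1 := hT x₀
    rw [hdecomp, len_append_cons] at h1
    have h2 : T.path y = l₁ ++ [y] := path_prefix T l₂ x₀ l₁ y hdecomp
    have h3 := hT y
    rw [h2] at h3
    rw [← hA] at h1
    linarith
  have hneg : len ω' (A ++ (y₀ :: σ') ++ [y]) < 0 := by
    rw [hlenC, hA', hσ'', hlenA]
    linarith
  exact ⟨hcyc, hneg, ⟨_, hcyc, hneg⟩⟩

end DynSPT
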